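/- Let M be a nondeterministic causal model with variables V = {X, T_1, ..., T_k, Y}, where X deterministically equals (T_1,...,T_l) for some fixed l < k, each T_i for i > l has parents {T_1,...,T_{i-1}} with conditional distribution P(T_i | T_1,...,T_{i-1}), and Y deterministically equals (T_1,...,T_k). Then M satisfies the simple semantics: for every factual valuation v of V containing X = x, and every counterfactual root value x* ≠ x, the counterfactual distribution P*(V* = v* | V = v, X* = x*) equals the observational conditional distribution P(V = v* | X = x*). -/

import Mathlib

/-- A nondeterministic causal model: finite variables with finite domains,
an acyclic graph (witnessed by a rank function), and Markov-factorizing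
conditional distributions `cond i v x = P(X_i = x | parents take values as in v)`. -/
structure NCM (ι : Type) [Fintype ι] [DecidableEq ι] (Val : ι → Type)
    [∀ i, Fintype (Val i)] [∀ i, DecidableEq (Val i)] where
  parents : ι → Finset ι
  rank : ι → ℕ
  acyclic : ∀ i, ∀ j ∈ parents i, rank j < rank i
  cond : (i : ι) → ((j : ι) → Val j) → Val i → ℝ
  cond_nonneg : ∀ i v x, 0 ≤ cond i v x
  cond_sum : ∀ i v, ∑ x, cond i v x = 1
  cond_local : ∀ i v w, (∀ j ∈ parents i, v j = w j) → cond i v = cond i w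

namespace NCM

variable {ι : Type} [Fintype ι] [DecidableEq ι] {Val : ι → Type}
  [∀ i, Fintype (Val i)] [∀ i, DecidableEq (Val i)]

/-- The root variables: those with no parents. -/
def rootSet (M : NCM ι Val) : Finset ι := Finset.univ.filter (fun i => M.parents i = ∅)

/-- The non-root variables. -/
def nonrootSet (M : NCM ι Val) : Finset ι := Finset.univ.filter (fun i => M.parents i ≠ ∅)

/-- `P(V = v | R = roots of v)`: Markov product over the non-root variables. -/
def obsCond (M : NCM ι Val) (v : (j : ι) → Val j) : ℝ :=
  ∏ i ∈ M.nonrootSet, M.cond i v (v i)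

/-- The observational conditional distribution `P(V = v | R = r)`. -/
def obs (M : NCM ι Val) (r v : (j : ι) → Val j) : ℝ :=
  if ∀ i ∈ M.rootSet, v i = r i then M.obsCond v else 0

/-- The updated conditional `P^v`: a point mass on the actual value when all parents
take their actual values, and unchanged otherwise. -/
def condUpd (M : NCM ι Val) (vact : (j : ι) → Val j) (i : ι)
    (v : (j : ι) → Val j) (x : Val i) : ℝ :=
  if ∀ j ∈ M.parents i, v j = vact j then (if x = vact i then 1 else 0)
  else M.cond i v x

/-- `P^{vact}(V = v | R = roots of v)`: Markov product of the updated conditionals. -/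
def updCond (M : NCM ι Val) (vact v : (j : ι) → Val j) : ℝ :=
  ∏ i ∈ M.nonrootSet, M.condUpd vact i v (v i)

/-- The counterfactual distribution `P*(V* = v | V = vact, R* = r) := P^{vact}(V = v | R = r)`. -/
def cf (M : NCM ι Val) (vact r v : (j : ι) → Val j) : ℝ :=
  if ∀ i ∈ M.rootSet, v i = r i then M.updCond vact v else 0

/-- `M` satisfies the simple semantics: whenever the counterfactual root values differ
from the actual ones, counterfactual probabilities equal observational ones. -/
def simpleSemantics (M : NCM ι Val) : Prop :=
  ∀ vact r, (¬ ∀ i ∈ M.rootSet, r i = vact i) →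
    ∀ v, M.cf vact r v = M.obs r v

end NCM

/-- The variables of the causal model of an LLM: the prompt `X`,
the tokens `T 0, ..., T (k-1)`, and the output `Y`. -/
inductive Var (k : ℕ) where
  | X : Var k
  | T : Fin k → Var k
  | Y : Var k
deriving DecidableEq, Fintype

/-- The domains: the prompt is a sequence of `l` tokens from the vocabulary `Voc`,
each `T i` is a token, and the output is a sequence of `k` tokens. -/
def LVal (Voc : Type) (k l : ℕ) : Var k → Type
  | .X => Fin l → Voc
  | .T _ => Voc
  | .Y => Fin k → Voc

instance (Voc : Type) (k l : ℕ) [Fintype Voc] [DecidableEq Voc] :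
    ∀ i : Var k, Fintype (LVal Voc k l i)
  | .X => inferInstanceAs (Fintype (Fin l → Voc))
  | .T _ => inferInstanceAs (Fintype Voc)
  | .Y => inferInstanceAs (Fintype (Fin k → Voc))

instance (Voc : Type) (k l : ℕ) [DecidableEq Voc] :
    ∀ i : Var k, DecidableEq (LVal Voc k l i)
  | .X => inferInstanceAs (DecidableEq (Fin l → Voc))
  | .T _ => inferInstanceAs (DecidableEq Voc)
  | .Y => inferInstanceAs (DecidableEq (Fin k → Voc))

/-- The nondeterministic causal model of an LLM, with variables
`X, T_1, ..., T_k, Y`, satisfies the simple semantics: for every factual valuation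
`vact` (with `X = x`) and counterfactual prompt `x* ≠ x`,
`P*(V* = v* | V = vact, X* = x*) = P(V = v* | X = x*)`. -/
theorem stmt1 (k l : ℕ) (hl : 0 < l) (hlk : l < k)
    (Voc : Type) [Fintype Voc] [DecidableEq Voc]
    (M : NCM (Var k) (LVal Voc k l))
    -- the prompt `X` is the (only) root variable
    (hX : M.parents Var.X = ∅)
    -- for `i < l`, the token `T i` is determined by the prompt: it is the `i`-th
    -- prompt token, i.e. `(T_1,...,T_l) = X`
    (hTlow : ∀ i : Fin k, (i : ℕ) < l → M.parents (Var.T i) = {Var.X})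
    (hTlowDet : ∀ i : Fin k, ∀ h : (i : ℕ) < l,
      ∀ (v : (j : Var k) → LVal Voc k l j) (x : Voc),
        M.cond (Var.T i) v x = if x = v Var.X ⟨(i : ℕ), h⟩ then 1 else 0)
    -- for `i ≥ l`, the token `T i` has parents `T_1, ..., T_{i-1}`, with an
    -- arbitrary conditional distribution `P(T_i | T_1, ..., T_{i-1})`
    (hThigh : ∀ i : Fin k, l ≤ (i : ℕ) →
      M.parents (Var.T i) = (Finset.univ.filter (fun j : Fin k => j < i)).image Var.T)
    -- the output `Y` deterministically equals `(T_1, ..., T_k)`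
    (hYpar : M.parents Var.Y = Finset.univ.image Var.T)
    (hYdet : ∀ (v : (j : Var k) → LVal Voc k l j) (y : Fin k → Voc),
      M.cond Var.Y v y = @ite ℝ (y = (fun j => v (Var.T j)))
        ((inferInstance : DecidableEq (Fin k → Voc)) _ _) 1 0)
    -- the factual valuation (a genuinely possible observation) with prompt `x = vact X`
    (vact : (j : Var k) → LVal Voc k l j) (hvact : 0 < M.obsCond vact)
    -- the counterfactual prompt `x* ≠ x`
    (xstar : Fin l → Voc) (hx : xstar ≠ vact Var.X) :
    ∀ vstar : (j : Var k) → LVal Voc k l j,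
      M.cf vact (Function.update vact Var.X xstar) vstar
        = M.obs (Function.update vact Var.X xstar) vstar := by
  intro vstar
  have hk0 : 0 < k := lt_trans hl hlk
  -- membership facts
  have hTnonroot : ∀ j : Fin k, Var.T j ∈ M.nonrootSet := by
    intro j
    simp only [NCM.nonrootSet, Finset.mem_filter, Finset.mem_univ, true_and]
    by_cases hj : (j : ℕ) < l
    · rw [hTlow j hj]; simp
    · rw [hThigh j (le_of_not_gt hj)]
      intro hemp
      have h0j : (⟨0, hk0⟩ : Fin k) < j := by
        have : 0 < (j : ℕ) := lt_of_lt_of_le hl (le_of_not_gt hj)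
        exact this
      have : Var.T ⟨0, hk0⟩ ∈ (Finset.univ.filter (fun m : Fin k => m < j)).image Var.T := by
        apply Finset.mem_image_of_mem
        simp [h0j]
      rw [hemp] at this
      exact absurd this (Finset.notMem_empty _)
  have hYnonroot : Var.Y ∈ M.nonrootSet := by
    simp only [NCM.nonrootSet, Finset.mem_filter, Finset.mem_univ, true_and]
    rw [hYpar]
    intro hemp
    have : Var.T ⟨0, hk0⟩ ∈ Finset.univ.image (Var.T (k := k)) :=
      Finset.mem_image_of_mem _ (Finset.mem_univ _)
    rw [hemp] at this
    exact absurd this (Finset.notMem_empty _)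
  have hroot : M.rootSet = {Var.X} := by
    ext i
    simp only [NCM.rootSet, Finset.mem_filter, Finset.mem_univ, true_and,
      Finset.mem_singleton]
    constructor
    · intro hp
      cases i with
      | X => rfl
      | T j =>
        exfalso
        have := hTnonroot j
        simp only [NCM.nonrootSet, Finset.mem_filter, Finset.mem_univ, true_and] at this
        exact this hp
      | Y =>
        exfalso
        have := hYnonroot
        simp only [NCM.nonrootSet, Finset.mem_filter, Finset.mem_univ, true_and] at this
        exact this hp
    · rintro rfl; exact hX
  -- from hvact: each factor is nonzero, so vact (T m) = vact X m for m < l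
  have hfac : ∀ j : Fin k, M.cond (Var.T j) vact (vact (Var.T j)) ≠ 0 := by
    intro j hz
    have : M.obsCond vact = 0 := Finset.prod_eq_zero (hTnonroot j) hz
    rw [this] at hvact
    exact lt_irrefl 0 hvact
  have hvactT : ∀ j : Fin k, ∀ h : (j : ℕ) < l,
      vact (Var.T j) = vact Var.X ⟨(j : ℕ), h⟩ := by
    intro j h
    have := hfac j
    rw [hTlowDet j h vact (vact (Var.T j))] at this
    by_contra hne
    replace this := fun (h' : (0:ℝ) = 0) => this ((if_neg hne).trans h')
    exact this rfl
  -- value of the counterfactual root at X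
  have hrX : Function.update vact Var.X xstar Var.X = xstar := Function.update_self _ _ _
  have hxne : (Function.update vact Var.X xstar) Var.X ≠ vact Var.X := by
    rw [hrX]; exact hx
  -- root condition is equivalent on both sides
  unfold NCM.cf NCM.obs
  by_cases hcond : ∀ i ∈ M.rootSet, vstar i = Function.update vact Var.X xstar i
  · rw [if_pos hcond, if_pos hcond]
    have hvX : vstar Var.X = xstar := by
      have := hcond Var.X (by rw [hroot]; exact Finset.mem_singleton_self _)
      rwa [hrX] at this
    have hvXne : vstar Var.X ≠ vact Var.X := by rw [hvX]; exact hx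
    unfold NCM.updCond NCM.obsCond
    by_cases hB : ∃ m : Fin k, ∃ h : (m : ℕ) < l, vstar (Var.T m) ≠ vact (Var.T m)
    · -- case B: some low token disagrees; all updated conditionals equal originals
      obtain ⟨m, hml, hm⟩ := hB
      apply Finset.prod_congr rfl
      intro i hi
      unfold NCM.condUpd
      rw [if_neg]
      intro hall
      cases i with
      | X =>
        simp only [NCM.nonrootSet, Finset.mem_filter, Finset.mem_univ, true_and] at hi
        exact hi hX
      | T j =>
        by_cases hj : (j : ℕ) < l
        · have := hall Var.X (by rw [hTlow j hj]; exact Finset.mem_singleton_self _)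
          exact hvXne this
        · have hmj : m < j := show (m : ℕ) < (j : ℕ) from lt_of_lt_of_le hml (le_of_not_gt hj)
          have := hall (Var.T m) (by
            rw [hThigh j (le_of_not_gt hj)]
            exact Finset.mem_image_of_mem _ (by simp [hmj]))
          exact hm this
      | Y =>
        have := hall (Var.T m) (by
          rw [hYpar]
          exact Finset.mem_image_of_mem _ (Finset.mem_univ _))
        exact hm this
    · -- case A: all low tokens agree with vact; both products are zero
      push_neg at hB
      obtain ⟨m0, hm0⟩ : ∃ m0 : Fin l, xstar m0 ≠ vact Var.X m0 := by
        by_contra hc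
        push_neg at hc
        exact hx (funext hc)
      set m : Fin k := ⟨(m0 : ℕ), lt_trans m0.isLt hlk⟩ with hm
      have hml : (m : ℕ) < l := m0.isLt
      have hcast : (⟨(m : ℕ), hml⟩ : Fin l) = m0 := rfl
      have hvTm : vstar (Var.T m) = vact (Var.T m) := hB m hml
      have hz : M.cond (Var.T m) vstar (vstar (Var.T m)) = 0 := by
        rw [hTlowDet m hml vstar (vstar (Var.T m)), if_neg]
        rw [hvTm, hvactT m hml, hvX, hcast]
        exact fun h => hm0 h.symm
      have hz' : M.condUpd vact (Var.T m) vstar (vstar (Var.T m)) = 0 := by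
        unfold NCM.condUpd
        rw [if_neg, hz]
        intro hall
        exact hvXne (hall Var.X (by rw [hTlow m hml]; exact Finset.mem_singleton_self _))
      rw [Finset.prod_eq_zero (hTnonroot m) hz',
        Finset.prod_eq_zero (hTnonroot m) hz]
  · rw [if_neg hcond, if_neg hcond]
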